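/- Let A ≥ 0 and C ≥ 1 be constants and a : ℕ → ℝ a sequence with a(m) ≥ 0 for all m, satisfying a(m+1) ≤ ( A^{2^{m+1}} + C·2^{10m}·a(m)^{2^{m+1}} + 1 )^{1/2^{m+1}} for all m ≥ 1. Then a(m) ≤ max{A, a(1), 1} · (C+2)^{1/2} · 2^{10} for all m ≥ 1; in particular sup_{m≥1} a(m) < ∞. -/

import Mathlib

/-- Abstract Alikakos iteration lemma: if `a m ≥ 0` and
`a (m+1) ≤ (A ^ (2^(m+1)) + C * 2^(10 m) * a m ^ (2^(m+1)) + 1) ^ (1 / 2^(m+1))`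
for all `m ≥ 1`, with `A ≥ 0` and `C ≥ 1`, then
`a m ≤ max {A, a 1, 1} * (C + 2) ^ (1/2) * 2 ^ 10` for all `m ≥ 1`;
in particular `sup_{m ≥ 1} a m < ∞`. -/
theorem alikakos_iteration_bound
    (A C : ℝ) (hA : 0 ≤ A) (hC : 1 ≤ C) (a : ℕ → ℝ)
    (ha : ∀ m : ℕ, 0 ≤ a m)
    (hrec : ∀ m : ℕ, 1 ≤ m →
      a (m + 1) ≤ (A ^ (2 ^ (m + 1) : ℕ) + C * 2 ^ (10 * m : ℕ) * a m ^ (2 ^ (m + 1) : ℕ) + 1)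
        ^ ((1 : ℝ) / 2 ^ (m + 1))) :
    (∀ m : ℕ, 1 ≤ m → a m ≤ max (max A (a 1)) 1 * (C + 2) ^ ((1 : ℝ) / 2) * 2 ^ (10 : ℕ)) ∧
      BddAbove (Set.range fun m : ℕ => a (m + 1)) := by
  set M := max (max A (a 1)) 1 with hMdef
  have hM1 : (1:ℝ) ≤ M := le_max_right _ _
  have hM0 : (0:ℝ) ≤ M := le_trans zero_le_one hM1
  have hAM : A ≤ M := le_trans (le_max_left _ _) (le_max_left _ _)
  have ha1M : a 1 ≤ M := le_trans (le_max_right _ _) (le_max_left _ _)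
  have hC2 : (1:ℝ) ≤ C + 2 := by linarith
  have hC2pos : (0:ℝ) < C + 2 := by linarith
  have key : ∀ m : ℕ, 1 ≤ m →
      a m ≤ M * (C + 2) ^ ((1:ℝ)/2 - 1/2^m) * (2:ℝ) ^ ((10:ℝ) - 10*(m+1)/2^m) := by
    intro m hm
    induction m, hm using Nat.le_induction with
    | base => norm_num; linarith
    | succ m hm ih =>
      have h2m : (2:ℝ) ≤ 2^m := by
        calc (2:ℝ) = 2^1 := by norm_num
        _ ≤ 2^m := by exact pow_le_pow_right₀ one_le_two hm
      have h2mpos : (0:ℝ) < 2^m := by positivity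
      have he0 : (0:ℝ) ≤ (1:ℝ)/2 - 1/2^m := by
        rw [sub_nonneg]
        exact one_div_le_one_div_of_le two_pos h2m
      have hmlt : ((m:ℝ)+1) ≤ 2^m := by
        have := Nat.lt_two_pow_self (n := m)
        have : ((m:ℝ)+1) ≤ ((2^m : ℕ) : ℝ) := by exact_mod_cast this
        simpa using this
      have hf0 : (0:ℝ) ≤ (10:ℝ) - 10*(m+1)/2^m := by
        rw [sub_nonneg, div_le_iff₀ h2mpos]
        nlinarith
      set e : ℝ := (1:ℝ)/2 - 1/2^m with he
      set f : ℝ := (10:ℝ) - 10*(m+1)/2^m with hf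
      set X : ℝ := M * (C + 2) ^ e * (2:ℝ) ^ f with hX
      have h1e : (1:ℝ) ≤ (C+2) ^ e := Real.one_le_rpow hC2 he0
      have h1f : (1:ℝ) ≤ (2:ℝ) ^ f := Real.one_le_rpow one_le_two hf0
      have hMX : M ≤ X := by
        calc M = M * 1 * 1 := by ring
        _ ≤ M * (C + 2) ^ e * (2:ℝ) ^ f :=
          mul_le_mul (mul_le_mul le_rfl h1e zero_le_one hM0) h1f zero_le_one (by positivity)
      have hX1 : (1:ℝ) ≤ X := le_trans hM1 hMX
      have hX0 : (0:ℝ) ≤ X := le_trans zero_le_one hX1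
      set N : ℕ := 2^(m+1) with hNdef
      have hN : ((N:ℕ):ℝ) = (2:ℝ)^(m+1) := by push_cast [hNdef]; ring
      have h1 : A ^ N ≤ X ^ N := pow_le_pow_left₀ hA (hAM.trans hMX) N
      have h2 : a m ^ N ≤ X ^ N := pow_le_pow_left₀ (ha m) ih N
      have h3 : (1:ℝ) ≤ X ^ N := one_le_pow₀ hX1
      have h2pow : (1:ℝ) ≤ (2:ℝ)^(10*m) := one_le_pow₀ one_le_two
      have hins : A^N + C*2^(10*m)*a m^N + 1 ≤ (C+2) * 2^(10*m) * X^N := by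
        have hc0 : (0:ℝ) ≤ C * 2^(10*m) := by positivity
        nlinarith [mul_le_mul_of_nonneg_left h2 hc0]
      have hstep : a (m+1) ≤ ((C+2) * 2^(10*m) * X^N) ^ ((1:ℝ)/2^(m+1)) := by
        have ham : (0:ℝ) ≤ a m ^ N := pow_nonneg (ha m) N
        refine (hrec m hm).trans (Real.rpow_le_rpow ?_ hins ?_)
        · exact add_nonneg (add_nonneg (pow_nonneg hA N) (mul_nonneg (by positivity) ham))
            zero_le_one
        · positivity
      have hsplit : ((C+2) * 2^(10*m) * X^N : ℝ) ^ ((1:ℝ)/2^(m+1))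
          = (C+2) ^ ((1:ℝ)/2^(m+1)) * (2:ℝ) ^ ((10*m : ℝ)/2^(m+1)) * X := by
        rw [Real.mul_rpow (by positivity) (by positivity),
            Real.mul_rpow (by positivity) (by positivity)]
        congr 1
        · congr 1
          rw [← Real.rpow_natCast (2:ℝ) (10*m), ← Real.rpow_mul (by norm_num)]
          push_cast
          ring_nf
        · rw [← Real.rpow_natCast X N, ← Real.rpow_mul hX0]
          have : ((N:ℕ):ℝ) * ((1:ℝ)/2^(m+1)) = 1 := by
            rw [hN]; field_simp
          rw [this, Real.rpow_one]
      have hcomb : (C+2) ^ ((1:ℝ)/2^(m+1)) * (2:ℝ) ^ ((10*m : ℝ)/2^(m+1)) * X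
          = M * (C + 2) ^ ((1:ℝ)/2 - 1/2^(m+1)) * (2:ℝ) ^ ((10:ℝ) - 10*((m:ℝ)+1+1)/2^(m+1)) := by
        have hee : (1:ℝ)/2 - 1/2^(m+1) = e + (1:ℝ)/2^(m+1) := by
          rw [he]
          have : (2:ℝ)^(m+1) = 2 * 2^m := by ring
          rw [this]
          field_simp
          ring
        have hff : (10:ℝ) - 10*((m:ℝ)+1+1)/2^(m+1) = f + (10*m : ℝ)/2^(m+1) := by
          rw [hf]
          have : (2:ℝ)^(m+1) = 2 * 2^m := by ring
          rw [this]
          field_simp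
          ring
        rw [hee, hff, Real.rpow_add hC2pos, Real.rpow_add two_pos, hX]
        ring
      have := hstep.trans_eq (hsplit.trans hcomb)
      convert this using 4 <;> push_cast <;> ring
  have bound : ∀ m : ℕ, 1 ≤ m → a m ≤ M * (C + 2) ^ ((1 : ℝ) / 2) * 2 ^ (10 : ℕ) := by
    intro m hm
    refine (key m hm).trans ?_
    have h2mpos : (0:ℝ) < 2^m := by positivity
    have h210 : ((2:ℝ) ^ (10:ℕ) : ℝ) = (2:ℝ) ^ ((10:ℝ)) := by
      rw [← Real.rpow_natCast (2:ℝ) 10]; norm_num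
    rw [h210]
    gcongr
    · have : (0:ℝ) ≤ 1/2^m := by positivity
      linarith
    · have : (0:ℝ) ≤ 10*((m:ℝ)+1)/2^m := by positivity
      linarith
    · have : (0:ℝ) ≤ 10*((m:ℝ)+1)/2^m := by positivity
      linarith
  refine ⟨bound, ⟨M * (C + 2) ^ ((1 : ℝ) / 2) * 2 ^ (10 : ℕ), ?_⟩⟩
  rintro x ⟨m, rfl⟩
  exact bound (m+1) (Nat.le_add_left 1 m)
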